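/- arXiv:1005.3434 — 3 statements merged into one kernel-verified Lean document; each statement's English description precedes it below -/
import Mathlib

section
/- (Siegel-type lemma) Let Λ₁,…,Λ_h ∈ (ℂ*)ⁿ with min_{p,k} |λ_{k,p}| = 4θ for some θ > 0 with 4θ ≤ 1, and let ω(m) ≤ 2 denote the simultaneous small-divisor function. Suppose Q > L are multi-indices (Q − L ∈ ℕⁿ \ {0}) with Q, L, Q−L all not simultaneously resonant, and suppose ε_Q < θ ω(m), ε_L < θ ω(m), and the minimizing coordinate indices coincide: i_Q = i_L. Then |Q − L| ≥ m. -/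
/-!
Put `D = Q - L` and `P = D + eᵢ`. Since `Λ^Q = Λ^L Λ^D` and both `Λ^Q`, `Λ^L` are within
`ε_Q`, `ε_L` of `λᵢ`, we get `‖Λ^L‖ ‖Λ^D - 1‖ ≤ ε_Q + ε_L`; as `ε_L < 2θ ≤ ‖λᵢ‖ / 2` forces
`‖λᵢ‖ ≤ 2 ‖Λ^L‖`, this gives `ε_P ≤ ‖λᵢ (Λ^D - 1)‖ ≤ 2 (ε_Q + ε_L) < 4θ ω(m) ≤ ω(m)`.
If `|D| < m` then `2 ≤ |P| ≤ m`, so `P` must be a simultaneous resonance. In that case each germ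
has a single eigenvalue `μₖ` with `μₖ^|D| = 1` and `|D| ≥ 2`, and `s eᵢ`, with `s ∈ [2, |D| + 1]`
congruent to `|Q|` modulo `|D|`, is a non-resonant multi-index with `ε_{s eᵢ} = ε_Q < ω(m)`.
-/

/-- `ε_Q = min_{1≤j≤n} max_{1≤k≤h} |Λ_k^Q − λ_{k,j}|` (here `h+2` germs in dimension `n+1`). -/
noncomputable def simEps {n h : ℕ} (Λ : Fin (h + 2) → Fin (n + 1) → ℂ)
    (Q : Fin (n + 1) → ℕ) : ℝ :=
  Finset.univ.inf' Finset.univ_nonempty fun j =>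
    Finset.univ.sup' Finset.univ_nonempty fun k =>
      ‖(∏ i, Λ k i ^ Q i) - Λ k j‖

/-- `Q` is a simultaneous resonance: `Λ_k^Q = λ_{k,j}` for every `k` and `j`. -/
def SimRes {n h : ℕ} (Λ : Fin (h + 2) → Fin (n + 1) → ℂ) (Q : Fin (n + 1) → ℕ) : Prop :=
  ∀ k j, (∏ i, Λ k i ^ Q i) = Λ k j

section Monomial

variable {ι M : Type*} [Fintype ι] [CommMonoid M]

lemma prod_pow_add (x : ι → M) (P R : ι → ℕ) :
    ∏ j, x j ^ (P j + R j) = (∏ j, x j ^ P j) * ∏ j, x j ^ R j := by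
  simp only [pow_add, Finset.prod_mul_distrib]

lemma prod_pow_eq_mul_prod_pow_sub (x : ι → M) {P R : ι → ℕ} (hRP : ∀ j, R j ≤ P j) :
    ∏ j, x j ^ P j = (∏ j, x j ^ R j) * ∏ j, x j ^ (P j - R j) := by
  rw [← prod_pow_add]
  exact Finset.prod_congr rfl fun j _ => by rw [Nat.add_sub_cancel' (hRP j)]

lemma prod_pow_piSingle [DecidableEq ι] (x : ι → M) (i : ι) (s : ℕ) :
    ∏ j, x j ^ Pi.single i s j = x i ^ s := by
  simp [Pi.single_apply, pow_ite]

lemma prod_pow_of_forall_eq {x : ι → M} {c : M} (hx : ∀ j, x j = c) (P : ι → ℕ) :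
    ∏ j, x j ^ P j = c ^ ∑ j, P j := by
  simp only [hx, Finset.prod_pow_eq_pow_sum]

end Monomial

lemma exists_modEq_of_two_le (N : ℕ) {d : ℕ} (hd : 2 ≤ d) :
    ∃ s, 2 ≤ s ∧ s ≤ d + 1 ∧ s ≡ N [MOD d] := by
  have hlt : N % d < d := Nat.mod_lt _ (by omega)
  by_cases hr : 2 ≤ N % d
  · exact ⟨N % d, hr, by omega, Nat.mod_modEq N d⟩
  · exact ⟨N % d + d, by omega, by omega, Nat.add_modulus_modEq_iff.2 (Nat.mod_modEq N d)⟩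

lemma norm_mul_sub_self_le {𝕜 : Type*} [NormedField 𝕜] {a d l : 𝕜} {εQ εL : ℝ}
    (hQ : ‖a * d - l‖ ≤ εQ) (hL : ‖a - l‖ ≤ εL) (hl : 2 * εL ≤ ‖l‖) :
    ‖d * l - l‖ ≤ 2 * (εQ + εL) := by
  have hla : ‖l‖ ≤ 2 * ‖a‖ := by linarith [norm_sub_norm_le l a, norm_sub_rev a l]
  have had : ‖a‖ * ‖d - 1‖ ≤ εQ + εL := by
    rw [← norm_mul, show a * (d - 1) = (a * d - l) - (a - l) by ring]
    exact (norm_sub_le _ _).trans (add_le_add hQ hL)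
  calc ‖d * l - l‖ = ‖l‖ * ‖d - 1‖ := by rw [← norm_mul]; ring_nf
    _ ≤ 2 * ‖a‖ * ‖d - 1‖ := by gcongr
    _ ≤ 2 * (εQ + εL) := by rw [mul_assoc]; gcongr

section SimultaneousResonance

variable {n h : ℕ} {Λ : Fin (h + 2) → Fin (n + 1) → ℂ}

lemma simEps_le_of_forall {P : Fin (n + 1) → ℕ} (i : Fin (n + 1)) {c : ℝ}
    (hc : ∀ k, ‖(∏ j, Λ k j ^ P j) - Λ k i‖ ≤ c) : simEps Λ P ≤ c :=
  (Finset.inf'_le _ (Finset.mem_univ i)).trans (Finset.sup'_le _ _ fun k _ => hc k)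

lemma simEps_nonneg (P : Fin (n + 1) → ℕ) : 0 ≤ simEps Λ P :=
  Finset.le_inf' _ _ fun j _ => (norm_nonneg _).trans
    (Finset.le_sup' (fun k => ‖(∏ i, Λ k i ^ P i) - Λ k j‖) (Finset.mem_univ 0))

lemma simEps_eq_of_prod_eq {P R : Fin (n + 1) → ℕ}
    (hPR : ∀ k, ∏ j, Λ k j ^ P j = ∏ j, Λ k j ^ R j) : simEps Λ P = simEps Λ R := by
  simp only [simEps, hPR]

lemma simRes_iff_of_prod_eq {P R : Fin (n + 1) → ℕ}
    (hPR : ∀ k, ∏ j, Λ k j ^ P j = ∏ j, Λ k j ^ R j) : SimRes Λ P ↔ SimRes Λ R := by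
  simp only [SimRes, hPR]

lemma prod_pow_add_single (D : Fin (n + 1) → ℕ) (i : Fin (n + 1)) (k : Fin (h + 2)) :
    ∏ j, Λ k j ^ (D + Pi.single i 1 : Fin (n + 1) → ℕ) j =
      (∏ j, Λ k j ^ D j) * Λ k i := by
  simp only [Pi.add_apply, prod_pow_add, prod_pow_piSingle, pow_one]

lemma eq_and_prod_eq_one_of_simRes_add_single {D : Fin (n + 1) → ℕ} {i : Fin (n + 1)}
    (hΛ : ∀ k, Λ k i ≠ 0) (hD : SimRes Λ (D + Pi.single i 1)) :
    (∀ k j, Λ k j = Λ k i) ∧ ∀ k, ∏ j, Λ k j ^ D j = 1 := by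
  have hD1 : ∀ k, ∏ j, Λ k j ^ D j = 1 := fun k =>
    mul_right_cancel₀ (hΛ k) (by rw [← prod_pow_add_single, hD k i, one_mul])
  refine ⟨fun k j => ?_, hD1⟩
  rw [← hD k j, prod_pow_add_single, hD1, one_mul]

lemma exists_not_simRes_of_simRes_add_single {D Q : Fin (n + 1) → ℕ} {i : Fin (n + 1)}
    (hΛ : ∀ k, Λ k i ≠ 0) (hD : SimRes Λ (D + Pi.single i 1))
    (hDres : ¬ SimRes Λ D) (hD1 : 1 ≤ ∑ j, D j) (hQres : ¬ SimRes Λ Q) :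
    ∃ P : Fin (n + 1) → ℕ, 2 ≤ ∑ j, P j ∧ ∑ j, P j ≤ ∑ j, D j + 1 ∧
      ¬ SimRes Λ P ∧ simEps Λ P = simEps Λ Q := by
  obtain ⟨heq, hprod⟩ := eq_and_prod_eq_one_of_simRes_add_single hΛ hD
  have hmono : ∀ k (P : Fin (n + 1) → ℕ), ∏ j, Λ k j ^ P j = Λ k i ^ ∑ j, P j :=
    fun k => prod_pow_of_forall_eq (heq k)
  have hμ : ∀ k, Λ k i ^ ∑ j, D j = 1 := fun k => by rw [← hmono, hprod]
  have hD2 : 2 ≤ ∑ j, D j := by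
    by_contra! hlt
    refine hDres fun k j => ?_
    have hμ1 : Λ k i = 1 := by simpa [show ∑ j, D j = 1 by omega] using hμ k
    rw [hprod, heq, hμ1]
  obtain ⟨s, hs2, hsD, hsQ⟩ := exists_modEq_of_two_le (∑ j, Q j) hD2
  have hPQ : ∀ k, ∏ j, Λ k j ^ Pi.single i s j = ∏ j, Λ k j ^ Q j := fun k => by
    rw [prod_pow_piSingle, hmono k Q, pow_eq_pow_of_modEq hsQ (hμ k)]
  refine ⟨Pi.single i s, ?_, ?_, (simRes_iff_of_prod_eq hPQ).not.2 hQres,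
    simEps_eq_of_prod_eq hPQ⟩ <;> rwa [Fintype.sum_pi_single']

lemma simEps_add_single_le {Q L : Fin (n + 1) → ℕ} (hLQ : ∀ j, L j ≤ Q j) {i : Fin (n + 1)}
    (hiQ : ∀ k, ‖(∏ j, Λ k j ^ Q j) - Λ k i‖ ≤ simEps Λ Q)
    (hiL : ∀ k, ‖(∏ j, Λ k j ^ L j) - Λ k i‖ ≤ simEps Λ L)
    (hL : ∀ k, 2 * simEps Λ L ≤ ‖Λ k i‖) :
    simEps Λ ((fun j => Q j - L j) + Pi.single i 1) ≤ 2 * (simEps Λ Q + simEps Λ L) := by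
  refine simEps_le_of_forall i fun k => ?_
  rw [prod_pow_add_single]
  refine norm_mul_sub_self_le ?_ (hiL k) (hL k)
  simpa only [← prod_pow_eq_mul_prod_pow_sub _ hLQ] using hiQ k

lemma exists_not_simRes_simEps_le {Q L : Fin (n + 1) → ℕ} (hLQ : ∀ j, L j ≤ Q j) (hne : L ≠ Q)
    (hQres : ¬ SimRes Λ Q) (hQLres : ¬ SimRes Λ (fun j => Q j - L j)) {i : Fin (n + 1)}
    (hΛ : ∀ k, Λ k i ≠ 0)
    (hiQ : ∀ k, ‖(∏ j, Λ k j ^ Q j) - Λ k i‖ ≤ simEps Λ Q)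
    (hiL : ∀ k, ‖(∏ j, Λ k j ^ L j) - Λ k i‖ ≤ simEps Λ L)
    (hL : ∀ k, 2 * simEps Λ L ≤ ‖Λ k i‖) :
    ∃ P : Fin (n + 1) → ℕ, 2 ≤ ∑ j, P j ∧ ∑ j, P j ≤ ∑ j, (Q j - L j) + 1 ∧
      ¬ SimRes Λ P ∧ simEps Λ P ≤ 2 * (simEps Λ Q + simEps Λ L) := by
  have hD1 : 1 ≤ ∑ j, (Q j - L j) := by
    obtain ⟨j, hj⟩ := Function.ne_iff.mp hne
    exact (show 1 ≤ Q j - L j by have := hLQ j; omega).trans <|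
      Finset.single_le_sum (f := fun j => Q j - L j) (fun j _ => Nat.zero_le _)
        (Finset.mem_univ j)
  by_cases hP : SimRes Λ ((fun j => Q j - L j) + Pi.single i 1)
  · obtain ⟨P, hP2, hPD, hPres, hPε⟩ :=
      exists_not_simRes_of_simRes_add_single hΛ hP hQLres hD1 hQres
    refine ⟨P, hP2, hPD, hPres, hPε ▸ ?_⟩
    linarith [simEps_nonneg (Λ := Λ) Q, simEps_nonneg (Λ := Λ) L]
  · refine ⟨_, ?_, ?_, hP, simEps_add_single_le hLQ hiQ hiL hL⟩ <;>
      simp only [Pi.add_apply, Finset.sum_add_distrib, Fintype.sum_pi_single'] <;> omega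

end SimultaneousResonance

theorem stmt_9_general (n h m : ℕ)
    (Λ : Fin (h + 2) → Fin (n + 1) → ℂ)
    (θ : ℝ) (hθpos : 0 < θ)
    (hθmin : ∀ k p, 4 * θ ≤ ‖Λ k p‖)
    (hθ1 : 4 * θ ≤ 1)
    (ω : ℕ → ℝ)
    (hω2 : ∀ m' : ℕ, ω m' ≤ 2)
    (hωle : ∀ (m' : ℕ) (P : Fin (n + 1) → ℕ), 2 ≤ ∑ i, P i → ∑ i, P i ≤ m' →
      ¬ SimRes Λ P → ω m' ≤ simEps Λ P)
    (Q L : Fin (n + 1) → ℕ) (hLQ : ∀ i, L i ≤ Q i) (hne : L ≠ Q)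
    (hQres : ¬ SimRes Λ Q)
    (hQLres : ¬ SimRes Λ (fun i => Q i - L i))
    (i : Fin (n + 1))
    (hiQ : ∀ k, ‖(∏ i', Λ k i' ^ Q i') - Λ k i‖ ≤ simEps Λ Q)
    (hiL : ∀ k, ‖(∏ i', Λ k i' ^ L i') - Λ k i‖ ≤ simEps Λ L)
    (hεQ : simEps Λ Q < θ * ω m) (hεL : simEps Λ L < θ * ω m) :
    m ≤ ∑ i', (Q i' - L i') := by
  by_contra! hlt
  have hω0 : 0 ≤ ω m :=
    nonneg_of_mul_nonneg_right ((simEps_nonneg Q).trans hεQ.le) hθpos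
  have hεL2 : simEps Λ L < 2 * θ :=
    hεL.trans_le (by linarith [mul_le_mul_of_nonneg_left (hω2 m) hθpos.le])
  have hL : ∀ k, 2 * simEps Λ L ≤ ‖Λ k i‖ := fun k => by linarith [hθmin k i]
  have hΛ : ∀ k, Λ k i ≠ 0 := fun k => norm_pos_iff.1 (by linarith [hθmin k i])
  obtain ⟨P, hP2, hPm, hPres, hPε⟩ :=
    exists_not_simRes_simEps_le hLQ hne hQres hQLres hΛ hiQ hiL hL
  exact lt_irrefl _ <| calc
    ω m ≤ simEps Λ P := hωle m P hP2 (by omega) hPres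
    _ ≤ 2 * (simEps Λ Q + simEps Λ L) := hPε
    _ < 4 * θ * ω m := by linarith
    _ ≤ ω m := mul_le_of_le_one_left hω0 hθ1

/-- Siegel-type lemma: with `4θ = min_{k,p} |λ_{k,p}| ≤ 1`, `ω` the
simultaneous small-divisor function (non-increasing, `ω ≤ 2`, and `ω m ≤ ε_P` for every
admissible `P` with `2 ≤ |P| ≤ m`), if `Q > L`, the multi-indices `Q`, `L`, `Q − L` are
not simultaneously resonant, `ε_Q < θ·ω(m)`, `ε_L < θ·ω(m)`, and the minimizing
coordinate indices coincide (`i_Q = i_L = i`), then `|Q − L| ≥ m`. -/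
theorem stmt_9 (n h m : ℕ) (hm : 2 ≤ m)
    (Λ : Fin (h + 2) → Fin (n + 1) → ℂ) (hΛ : ∀ k p, Λ k p ≠ 0)
    (θ : ℝ) (hθpos : 0 < θ)
    (hθmin : ∀ k p, 4 * θ ≤ ‖Λ k p‖)
    (hθattain : ∃ k p, 4 * θ = ‖Λ k p‖)
    (hθ1 : 4 * θ ≤ 1)
    (ω : ℕ → ℝ)
    (hωanti : ∀ a b : ℕ, a ≤ b → ω b ≤ ω a)
    (hω2 : ∀ m' : ℕ, ω m' ≤ 2)
    (hωle : ∀ (m' : ℕ) (P : Fin (n + 1) → ℕ), 2 ≤ ∑ i, P i → ∑ i, P i ≤ m' →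
      ¬ SimRes Λ P → ω m' ≤ simEps Λ P)
    (Q L : Fin (n + 1) → ℕ) (hLQ : ∀ i, L i ≤ Q i) (hne : L ≠ Q)
    (hQres : ¬ SimRes Λ Q) (hLres : ¬ SimRes Λ L)
    (hQLres : ¬ SimRes Λ (fun i => Q i - L i))
    (i : Fin (n + 1))
    (hiQ : ∀ k, ‖(∏ i', Λ k i' ^ Q i') - Λ k i‖ ≤ simEps Λ Q)
    (hiL : ∀ k, ‖(∏ i', Λ k i' ^ L i') - Λ k i‖ ≤ simEps Λ L)
    (hεQ : simEps Λ Q < θ * ω m) (hεL : simEps Λ L < θ * ω m) :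
    m ≤ ∑ i', (Q i' - L i') :=
  stmt_9_general n h m Λ θ hθpos hθmin hθ1 ω hω2 hωle Q L hLQ hne hQres hQLres i hiQ hiL hεQ hεL
end

section
/- Define α_m for m ≥ 1 by α₁ = 1 and α_m = ∑_{m₁+⋯+m_ν = m, ν ≥ 2, m_i ≥ 1} α_{m₁}⋯α_{m_ν} for m ≥ 2 (sum over all ordered compositions of m into at least two positive parts). Then sup_{m≥1} (1/m) log α_m < +∞; equivalently, there exists C > 0 such that α_m ≤ C^m for all m ≥ 1. -/
/-!
Cutting off the first block identifies the compositions of `m` into at least two parts with the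
pairs (first part `a < m`, composition of `m - a`). For `T k`, the sum of `∏ α (c_i)` over all
compositions `c` of `k`, this gives `T k = α k + [k ≥ 2] α k`, so `0 ≤ T k ≤ 2 α k`, and the
recursion becomes the Catalan-type inequality `α m ≤ 2 ∑_{a < m} α a α (m - a)`. Comparing with
`2^(m-1) catalan (m-1)`, the solution of the corresponding equality, yields
`α m ≤ 2^(m-1) 4^(m-1) ≤ 8^m`.
-/

open Finset

def compositionSum {R : Type*} [CommSemiring R] (f : ℕ → R) (n : ℕ) : R :=
  ∑ c : Composition n, ∏ i, f (c.blocksFun i)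

namespace Composition

variable {n : ℕ}

-- Total because `[].headI = 0`.
def tail (c : Composition n) : Composition (n - c.blocks.headI) where
  blocks := c.blocks.tail
  blocks_pos hi := c.blocks_pos (List.mem_of_mem_tail hi)
  blocks_sum := by
    have hsum := c.blocks_sum
    cases h : c.blocks with
    | nil => simp_all
    | cons a l => simp only [h, List.sum_cons] at hsum; simp; omega

def cons {a : ℕ} (ha : 0 < a) (han : a ≤ n) (c : Composition (n - a)) : Composition n where
  blocks := a :: c.blocks
  blocks_pos hi := (List.mem_cons.1 hi).elim (· ▸ ha) c.blocks_pos
  blocks_sum := by simp; omega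

theorem blocks_eq_headI_cons_tail (c : Composition n) (hn : 0 < n) :
    c.blocks = c.blocks.headI :: c.tail.blocks :=
  (List.cons_head!_tail (by simpa [blocks_eq_nil] using hn.ne')).symm

theorem prod_blocksFun {M : Type*} [CommMonoid M] (f : ℕ → M) (c : Composition n) :
    ∏ i, f (c.blocksFun i) = (c.blocks.map f).prod := by
  rw [← c.ofFn_blocksFun, List.map_ofFn, List.prod_ofFn]
  rfl

theorem sum_filter_two_le_length {R : Type*} [CommSemiring R] (f : ℕ → R) (m : ℕ) :
    ∑ c ∈ univ.filter (fun c : Composition m => 2 ≤ c.length), ∏ i, f (c.blocksFun i) =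
      ∑ a ∈ Ico 1 m, f a * compositionSum f (m - a) := by
  simp only [compositionSum, mul_sum, prod_blocksFun]
  rw [sum_sigma']
  refine sum_bij' (fun c _ => ⟨c.blocks.headI, c.tail⟩)
    (fun p hp => cons (by simp at hp; omega) (by simp at hp; omega) p.2) ?_ ?_ ?_ ?_ ?_
  · intro c hc
    have hlen : 2 ≤ c.length := (mem_filter.1 hc).2
    have hm : 0 < m := c.length_pos_iff.1 (by omega)
    have hhead : 0 < c.blocks.headI :=
      c.blocks_pos (List.head!_mem_self (by simpa [blocks_eq_nil] using hm.ne'))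
    have htail_length : c.tail.length = c.length - 1 := List.length_tail
    have htail : 0 < m - c.blocks.headI := c.tail.length_pos_iff.1 (by omega)
    simp only [mem_sigma, mem_Ico, mem_univ, and_true]
    omega
  · intro p hp
    simp only [mem_sigma, mem_Ico] at hp
    have := p.2.length_pos_iff.2 (by omega)
    simp only [mem_filter, mem_univ, true_and]
    show 2 ≤ p.2.length + 1
    omega
  · intro c hc
    ext1
    exact (c.blocks_eq_headI_cons_tail (c.length_pos_iff.1 (by simp at hc; omega))).symm
  · intro p hp
    rfl
  · intro c hc
    show (c.blocks.map f).prod = f c.blocks.headI * (c.tail.blocks.map f).prod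
    conv_lhs => rw [c.blocks_eq_headI_cons_tail (c.length_pos_iff.1 (by simp at hc; omega))]
    rfl

end Composition

open Composition

theorem compositionSum_eq_add_sum_Ico {R : Type*} [CommSemiring R] (f : ℕ → R) {m : ℕ}
    (hm : 0 < m) :
    compositionSum f m = f m + ∑ a ∈ Ico 1 m, f a * compositionSum f (m - a) := by
  have hsingle : univ.filter (fun c : Composition m => ¬ 2 ≤ c.length) = {single m hm} := by
    ext c
    have := c.length_pos_iff.2 hm
    simp only [mem_filter, mem_univ, true_and, mem_singleton, eq_single_iff_length hm]
    omega
  rw [compositionSum, ← sum_filter_not_add_sum_filter univ (fun c : Composition m => 2 ≤ c.length),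
    hsingle, sum_singleton, prod_blocksFun, single_blocks, sum_filter_two_le_length]
  simp

theorem catalan_le_four_pow (n : ℕ) : catalan n ≤ 4 ^ n :=
  (catalan_eq_centralBinom_div n ▸ Nat.div_le_self _ _).trans (Nat.centralBinom_le_four_pow n)

theorem le_pow_mul_catalan_of_le_mul_sum_antidiagonal {R : Type*} [CommSemiring R] [PartialOrder R]
    [IsOrderedRing R] {v : ℕ → R} {c : R} (hc : 0 ≤ c) (hv : ∀ n, 0 ≤ v n) (hv0 : v 0 ≤ 1)
    (hvs : ∀ n, v (n + 1) ≤ c * ∑ ij ∈ antidiagonal n, v ij.1 * v ij.2) (n : ℕ) :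
    v n ≤ c ^ n * catalan n := by
  induction n using Nat.strong_induction_on with
  | _ n ih =>
  cases n with
  | zero => simpa using hv0
  | succ n =>
    calc v (n + 1) ≤ c * ∑ ij ∈ antidiagonal n, v ij.1 * v ij.2 := hvs n
      _ ≤ c * ∑ ij ∈ antidiagonal n, (c ^ ij.1 * catalan ij.1) * (c ^ ij.2 * catalan ij.2) := by
        gcongr with ij hij
        · exact hv _
        · exact ih _ (Nat.antidiagonal.fst_lt hij)
        · exact ih _ (Nat.antidiagonal.snd_lt hij)
      _ = c ^ (n + 1) * catalan (n + 1) := by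
        rw [catalan_succ', Nat.cast_sum, mul_sum, mul_sum, pow_succ']
        refine sum_congr rfl fun ij hij => ?_
        rw [HasAntidiagonal.mem_antidiagonal] at hij
        rw [← hij]
        push_cast
        ring

theorem sum_Ico_one_eq_sum_antidiagonal {M : Type*} [AddCommMonoid M] (g : ℕ → ℕ → M) (n : ℕ) :
    ∑ a ∈ Ico 1 (n + 2), g a (n + 2 - a) = ∑ ij ∈ antidiagonal n, g (ij.1 + 1) (ij.2 + 1) := by
  rw [Nat.sum_antidiagonal_eq_sum_range_succ (fun i j => g (i + 1) (j + 1)), sum_Ico_eq_sum_range]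
  refine sum_congr (by simp) fun k hk => ?_
  rw [mem_range] at hk
  congr 1 <;> omega

section FirstBlockRecursion

variable {u : ℕ → ℝ}

theorem compositionSum_mem_Icc
    (hsplit : ∀ m, 2 ≤ m → u m = ∑ a ∈ Ico 1 m, u a * compositionSum u (m - a))
    {k : ℕ} (hk : 0 < k) (h0 : 0 ≤ u k) : compositionSum u k ∈ Set.Icc 0 (2 * u k) := by
  rw [compositionSum_eq_add_sum_Ico u hk, Set.mem_Icc]
  rcases (by omega : k = 1 ∨ 2 ≤ k) with rfl | hk2
  · simp only [Ico_self, sum_empty, add_zero]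
    constructor <;> linarith
  · rw [← hsplit k hk2]
    constructor <;> linarith

theorem nonneg_of_first_block_recursion (hu1 : 0 ≤ u 1)
    (hsplit : ∀ m, 2 ≤ m → u m = ∑ a ∈ Ico 1 m, u a * compositionSum u (m - a))
    {m : ℕ} (hm : 0 < m) : 0 ≤ u m := by
  induction m using Nat.strong_induction_on with
  | _ m ih =>
  rcases (by omega : m = 1 ∨ 2 ≤ m) with rfl | hm2
  · exact hu1
  rw [hsplit m hm2]
  refine sum_nonneg fun a ha => ?_
  rw [mem_Ico] at ha
  exact mul_nonneg (ih a ha.2 ha.1)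
    (compositionSum_mem_Icc hsplit (by omega) (ih _ (by omega) (by omega))).1

theorem le_two_mul_sum_antidiagonal_of_first_block_recursion (hu1 : 0 ≤ u 1)
    (hsplit : ∀ m, 2 ≤ m → u m = ∑ a ∈ Ico 1 m, u a * compositionSum u (m - a)) (n : ℕ) :
    u (n + 2) ≤ 2 * ∑ ij ∈ antidiagonal n, u (ij.1 + 1) * u (ij.2 + 1) := by
  rw [hsplit _ (by omega), ← sum_Ico_one_eq_sum_antidiagonal (fun a b => u a * u b), mul_sum]
  refine sum_le_sum fun a ha => ?_
  rw [mem_Ico] at ha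
  have hnonneg := fun {k} (hk : 0 < k) => nonneg_of_first_block_recursion hu1 hsplit hk
  rw [mul_left_comm]
  exact mul_le_mul_of_nonneg_left
    (compositionSum_mem_Icc hsplit (by omega) (hnonneg (by omega))).2 (hnonneg (by omega))

end FirstBlockRecursion

/-- if `α 1 = 1` and, for `m ≥ 2`,
`α m = ∑ α_{m₁}⋯α_{m_ν}` over all ordered compositions `m = m₁ + ⋯ + m_ν` into `ν ≥ 2`
positive parts, then `sup_m (1/m) log α_m < ∞`, i.e. `α m ≤ C^m` for some `C > 0`. -/
theorem stmt_12 (α : ℕ → ℝ) (hα1 : α 1 = 1)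
    (hrec : ∀ m : ℕ, 2 ≤ m →
      α m = ∑ c ∈ Finset.univ.filter (fun c : Composition m => 2 ≤ c.length),
        ∏ i, α (c.blocksFun i)) :
    ∃ C : ℝ, 0 < C ∧ ∀ m : ℕ, 1 ≤ m → α m ≤ C ^ m := by
  have hsplit : ∀ m, 2 ≤ m → α m = ∑ a ∈ Ico 1 m, α a * compositionSum α (m - a) :=
    fun m hm => (hrec m hm).trans (sum_filter_two_le_length α m)
  have hα1_nonneg : 0 ≤ α 1 := hα1 ▸ zero_le_one
  refine ⟨8, by norm_num, fun m hm => ?_⟩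
  obtain ⟨n, rfl⟩ : ∃ n, m = n + 1 := ⟨m - 1, by omega⟩
  calc α (n + 1) ≤ 2 ^ n * catalan n :=
        le_pow_mul_catalan_of_le_mul_sum_antidiagonal (v := fun n => α (n + 1)) zero_le_two
          (fun n => nonneg_of_first_block_recursion hα1_nonneg hsplit n.succ_pos) hα1.le
          (le_two_mul_sum_antidiagonal_of_first_block_recursion hα1_nonneg hsplit) n
    _ ≤ 2 ^ n * 4 ^ n := by gcongr; exact_mod_cast catalan_le_four_pow n
    _ = 8 ^ n := by rw [← mul_pow]; norm_num
    _ ≤ 8 ^ (n + 1) := pow_le_pow_right₀ (by norm_num) n.le_succ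
end

section
/- Let Λ = [[λ,0,0],[ε,λ,0],[0,0,λ]] and M = [[μ,0,0],[δ,μ,0],[β,0,μ]] with λ, ε, μ, δ, β ∈ ℂ*. Then Λ and M are not almost simultaneously Jordanizable: there is no invertible 3×3 matrix A such that both A⁻¹ΛA and A⁻¹MA are lower-triangular matrices with constant diagonal within each Jordan-type block, i.e., of the form diagonal (λ_j) plus subdiagonal entries ε_j with ε_j ≠ 0 ⟹ λ_j = λ_{j+1}. -/
/-- A matrix is almost in Jordan normal form: lower bidiagonal (diagonal entries plus
subdiagonal entries, zeros elsewhere), and a nonzero subdiagonal entry forces the two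
adjacent diagonal entries to be equal. -/
def IsAlmostJordanNF {n : ℕ} (B : Matrix (Fin n) (Fin n) ℂ) : Prop :=
  (∀ i j : Fin n, i.1 ≠ j.1 → i.1 ≠ j.1 + 1 → B i j = 0) ∧
  (∀ i j : Fin n, i.1 = j.1 + 1 → B i j ≠ 0 → B j j = B i i)

/-- Entry `(2,0)` of a product of two strictly lower bidiagonal matrices. -/
private lemma subform_mul {x1 x2 y1 y2 : ℂ}
    (h : (!![0,0,0; x1,0,0; 0,x2,0] : Matrix (Fin 3) (Fin 3) ℂ) *
      !![0,0,0; y1,0,0; 0,y2,0] = 0) :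
    x2 * y1 = 0 := by
  have h' := congrFun (congrFun h 2) 0
  simpa [Matrix.mul_apply, Fin.sum_univ_three] using h'

/-- A lower bidiagonal matrix whose square (after subtracting `lam • 1`) vanishes has
constant diagonal `lam`, hence `B - lam • 1` is strictly lower bidiagonal. -/
private lemma subform_shape (B : Matrix (Fin 3) (Fin 3) ℂ) (lam : ℂ)
    (hz : ∀ i j : Fin 3, i.1 ≠ j.1 → i.1 ≠ j.1 + 1 → B i j = 0)
    (hsq : (B - lam • 1) * (B - lam • 1) = 0) :
    B - lam • 1 = !![0,0,0; B 1 0,0,0; 0, B 2 1,0] := by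
  have hB01 : B 0 1 = 0 := hz 0 1 (by decide) (by decide)
  have hB02 : B 0 2 = 0 := hz 0 2 (by decide) (by decide)
  have hB12 : B 1 2 = 0 := hz 1 2 (by decide) (by decide)
  have hB20 : B 2 0 = 0 := hz 2 0 (by decide) (by decide)
  have hB00 : B 0 0 = lam := by
    have h := congrFun (congrFun hsq 0) 0
    simp [Matrix.mul_apply, Fin.sum_univ_three, Matrix.sub_apply,
      Matrix.smul_apply, Matrix.one_apply, hB01, hB02] at h
    exact sub_eq_zero.mp h
  have hB11 : B 1 1 = lam := by
    have h := congrFun (congrFun hsq 1) 1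
    simp [Matrix.mul_apply, Fin.sum_univ_three, Matrix.sub_apply,
      Matrix.smul_apply, Matrix.one_apply, hB01, hB12] at h
    exact sub_eq_zero.mp h
  have hB22 : B 2 2 = lam := by
    have h := congrFun (congrFun hsq 2) 2
    simp [Matrix.mul_apply, Fin.sum_univ_three, Matrix.sub_apply,
      Matrix.smul_apply, Matrix.one_apply, hB20, hB12] at h
    exact sub_eq_zero.mp h
  ext i j
  fin_cases i <;> fin_cases j <;>
    simp [Matrix.sub_apply, Matrix.smul_apply, Matrix.one_apply,
      hB00, hB11, hB22, hB01, hB02, hB12, hB20] <;> try (first | rfl | exact Or.inr rfl)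

private lemma subform_ne_zero {x y : ℂ}
    (h : (!![0,0,0; x,0,0; y,0,0] : Matrix (Fin 3) (Fin 3) ℂ) = 0) : x = 0 := by
  have h' := congrFun (congrFun h 1) 0
  simpa using h'

private lemma subform_all_zero {x1 x2 : ℂ} (hx1 : x1 = 0) (hx2 : x2 = 0) :
    (!![0,0,0; x1,0,0; 0,x2,0] : Matrix (Fin 3) (Fin 3) ℂ) = 0 := by
  subst hx1; subst hx2
  ext i j
  fin_cases i <;> fin_cases j <;> simp <;> try rfl

private lemma subform_smul {x y : ℂ} :
    y • (!![0,0,0; x,0,0; 0,0,0] : Matrix (Fin 3) (Fin 3) ℂ) =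
      x • !![0,0,0; y,0,0; 0,0,0] := by
  ext i j
  fin_cases i <;> fin_cases j <;> simp [mul_comm] <;> try (first | rfl | exact Or.inr rfl)

private lemma subform_smul' {x y : ℂ} :
    y • (!![0,0,0; 0,0,0; 0,x,0] : Matrix (Fin 3) (Fin 3) ℂ) =
      x • !![0,0,0; 0,0,0; 0,y,0] := by
  ext i j
  fin_cases i <;> fin_cases j <;> simp [mul_comm] <;> try (first | rfl | exact Or.inr rfl)

private lemma subform_smul_entry {s t x y z : ℂ}
    (h : s • (!![0,0,0; x,0,0; 0,0,0] : Matrix (Fin 3) (Fin 3) ℂ) =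
      t • !![0,0,0; y,0,0; z,0,0]) : t * z = 0 := by
  have h' := congrFun (congrFun h 2) 0
  simpa [eq_comm] using h'

/-- the commuting matrices `Λ = [[λ,0,0],[ε,λ,0],[0,0,λ]]` and
`M = [[μ,0,0],[δ,μ,0],[β,0,μ]]` (all parameters nonzero) are not almost simultaneously
Jordanizable: no invertible `A` conjugates both into almost Jordan normal form. -/
theorem stmt_14 (lam ε μ δ β : ℂ) (hlam : lam ≠ 0) (hε : ε ≠ 0) (hμ : μ ≠ 0)
    (hδ : δ ≠ 0) (hβ : β ≠ 0) :
    ¬ ∃ A : Matrix (Fin 3) (Fin 3) ℂ, IsUnit A ∧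
      IsAlmostJordanNF (A⁻¹ * !![lam, 0, 0; ε, lam, 0; 0, 0, lam] * A) ∧
      IsAlmostJordanNF (A⁻¹ * !![μ, 0, 0; δ, μ, 0; β, 0, μ] * A) := by
  rintro ⟨A, hA, ⟨hBz, -⟩, ⟨hCz, -⟩⟩
  have hdet : IsUnit A.det := (Matrix.isUnit_iff_isUnit_det A).mp hA
  have h1 : A⁻¹ * A = 1 := Matrix.nonsing_inv_mul A hdet
  have h2 : A * A⁻¹ = 1 := Matrix.mul_nonsing_inv A hdet
  have lcancel : ∀ X Y : Matrix (Fin 3) (Fin 3) ℂ, A * X = A * Y → X = Y := by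
    intro X Y h
    have h' := congrArg (fun Z => A⁻¹ * Z) h
    simpa [← Matrix.mul_assoc, h1] using h'
  have rcancel : ∀ X Y : Matrix (Fin 3) (Fin 3) ℂ, X * A = Y * A → X = Y := by
    intro X Y h
    have h' := congrArg (fun Z => Z * A⁻¹) h
    simpa [Matrix.mul_assoc, h2] using h'
  set LL : Matrix (Fin 3) (Fin 3) ℂ := !![lam, 0, 0; ε, lam, 0; 0, 0, lam] with hLLdef
  set MM : Matrix (Fin 3) (Fin 3) ℂ := !![μ, 0, 0; δ, μ, 0; β, 0, μ] with hMMdef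
  set NL : Matrix (Fin 3) (Fin 3) ℂ := !![0,0,0; ε,0,0; 0,0,0] with hNLdef
  set NM : Matrix (Fin 3) (Fin 3) ℂ := !![0,0,0; δ,0,0; β,0,0] with hNMdef
  set B : Matrix (Fin 3) (Fin 3) ℂ := A⁻¹ * LL * A with hBdef
  set C : Matrix (Fin 3) (Fin 3) ℂ := A⁻¹ * MM * A with hCdef
  set N : Matrix (Fin 3) (Fin 3) ℂ := B - lam • 1 with hNdef
  set P : Matrix (Fin 3) (Fin 3) ℂ := C - μ • 1 with hPdef
  have hAB : A * B = LL * A := by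
    rw [hBdef, ← Matrix.mul_assoc, ← Matrix.mul_assoc, h2, Matrix.one_mul]
  have hAC : A * C = MM * A := by
    rw [hCdef, ← Matrix.mul_assoc, ← Matrix.mul_assoc, h2, Matrix.one_mul]
  have hLLN : LL = lam • 1 + NL := by
    rw [hLLdef, hNLdef]
    ext i j
    fin_cases i <;> fin_cases j <;> simp [Matrix.one_apply] <;> try (first | rfl | exact Or.inr rfl)
  have hMMN : MM = μ • 1 + NM := by
    rw [hMMdef, hNMdef]
    ext i j
    fin_cases i <;> fin_cases j <;> simp [Matrix.one_apply] <;> try (first | rfl | exact Or.inr rfl)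
  have hAN : A * N = NL * A := by
    rw [hNdef, Matrix.mul_sub, hAB, hLLN, Matrix.add_mul, Matrix.mul_smul,
      Matrix.smul_mul, Matrix.one_mul, Matrix.mul_one]
    abel
  have hAP : A * P = NM * A := by
    rw [hPdef, Matrix.mul_sub, hAC, hMMN, Matrix.add_mul, Matrix.mul_smul,
      Matrix.smul_mul, Matrix.one_mul, Matrix.mul_one]
    abel
  have mulNLNL : NL * NL = 0 := by
    rw [hNLdef]
    ext i j
    fin_cases i <;> fin_cases j <;> simp [Matrix.mul_apply, Fin.sum_univ_three] <;> try (first | rfl | exact Or.inr rfl)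
  have mulNLNM : NL * NM = 0 := by
    rw [hNLdef, hNMdef]
    ext i j
    fin_cases i <;> fin_cases j <;> simp [Matrix.mul_apply, Fin.sum_univ_three] <;> try (first | rfl | exact Or.inr rfl)
  have mulNMNL : NM * NL = 0 := by
    rw [hNLdef, hNMdef]
    ext i j
    fin_cases i <;> fin_cases j <;> simp [Matrix.mul_apply, Fin.sum_univ_three] <;> try (first | rfl | exact Or.inr rfl)
  have mulNMNM : NM * NM = 0 := by
    rw [hNMdef]
    ext i j
    fin_cases i <;> fin_cases j <;> simp [Matrix.mul_apply, Fin.sum_univ_three] <;> try (first | rfl | exact Or.inr rfl)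
  have key : ∀ X Y Z W : Matrix (Fin 3) (Fin 3) ℂ,
      A * X = Z * A → A * Y = W * A → Z * W = 0 → X * Y = 0 := by
    intro X Y Z W hX hY hZW
    apply lcancel
    rw [← Matrix.mul_assoc, hX, Matrix.mul_assoc, hY, ← Matrix.mul_assoc, hZW]
    simp
  have hNN : N * N = 0 := key N N NL NL hAN hAN mulNLNL
  have hNP : N * P = 0 := key N P NL NM hAN hAP mulNLNM
  have hPN : P * N = 0 := key P N NM NL hAP hAN mulNMNL
  have hPP : P * P = 0 := key P P NM NM hAP hAP mulNMNM
  have hNform : N = !![0,0,0; B 1 0,0,0; 0, B 2 1,0] := by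
    rw [hNdef]
    exact subform_shape B lam hBz (by rw [← hNdef]; exact hNN)
  have hPform : P = !![0,0,0; C 1 0,0,0; 0, C 2 1,0] := by
    rw [hPdef]
    exact subform_shape C μ hCz (by rw [← hPdef]; exact hPP)
  set b : ℂ := B 1 0 with hbdef
  set c : ℂ := B 2 1 with hcdef
  set d : ℂ := C 1 0 with hddef
  set e : ℂ := C 2 1 with hedef
  -- scalar relations
  have hcb : c * b = 0 := subform_mul (by rw [← hNform]; exact hNN)
  have hcd : c * d = 0 := subform_mul (by rw [← hNform, ← hPform]; exact hNP)
  have heb : e * b = 0 := subform_mul (by rw [← hNform, ← hPform]; exact hPN)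
  -- nonvanishing of (b, c) and (d, e)
  have hbc : ¬ (b = 0 ∧ c = 0) := by
    rintro ⟨hb0, hc0⟩
    have hN0 : N = 0 := by rw [hNform]; exact subform_all_zero hb0 hc0
    have hNL0 : NL = 0 := by
      apply rcancel
      rw [← hAN, hN0, Matrix.mul_zero, Matrix.zero_mul]
    refine hε (subform_ne_zero (x := ε) (y := (0:ℂ)) ?_)
    rw [← hNLdef]
    exact hNL0
  have hde : ¬ (d = 0 ∧ e = 0) := by
    rintro ⟨hd0, he0⟩
    have hP0 : P = 0 := by rw [hPform]; exact subform_all_zero hd0 he0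
    have hNM0 : NM = 0 := by
      apply rcancel
      rw [← hAP, hP0, Matrix.mul_zero, Matrix.zero_mul]
    exact hδ (subform_ne_zero (by rw [← hNM0, hNMdef]))
  -- final contradiction
  have final : ∀ s t : ℂ, t ≠ 0 → s • N = t • P → False := by
    intro s t ht hst
    have hAEq : (s • NL) * A = (t • NM) * A := by
      rw [Matrix.smul_mul, Matrix.smul_mul, ← hAN, ← hAP, ← Matrix.mul_smul,
        ← Matrix.mul_smul, hst]
    have hEq : s • NL = t • NM := rcancel _ _ hAEq
    rw [hNLdef, hNMdef] at hEq
    have := subform_smul_entry hEq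
    rcases mul_eq_zero.mp this with h | h
    · exact ht h
    · exact hβ h
  by_cases hb0 : b = 0
  · have hc0 : c ≠ 0 := fun h => hbc ⟨hb0, h⟩
    have hd0 : d = 0 := by
      rcases mul_eq_zero.mp hcd with h | h
      · exact absurd h hc0
      · exact h
    have he0 : e ≠ 0 := fun h => hde ⟨hd0, h⟩
    apply final e c hc0
    rw [hNform, hPform, hb0, hd0]
    exact subform_smul'
  · have hc0 : c = 0 := by
      rcases mul_eq_zero.mp hcb with h | h
      · exact h
      · exact absurd h hb0
    have he0 : e = 0 := by
      rcases mul_eq_zero.mp heb with h | h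
      · exact h
      · exact absurd h hb0
    have hd0 : d ≠ 0 := fun h => hde ⟨h, he0⟩
    apply final d b hb0
    rw [hNform, hPform, hc0, he0]
    exact subform_smul
end
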